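/- arXiv:1803.05528 — 8 statements merged into one kernel-verified Lean document; each statement's English description precedes it below -/
import Mathlib

section
/- Let ι, κ be finite index types with decidable equality, G : Matrix κ ι ℝ a real matrix, and let S, T : ι → κ → Prop and Y : ι → ι → Prop be sparsity patterns with T ≤ S and Y·T ≤ T. Suppose Q : Matrix ι κ ℝ satisfies Q ∈ Sparse(T), Q*G ∈ Sparse(Y), and (Q*G)^N = 0 for some natural number N. Then the matrix 1 + Q*G is invertible and the output-feedback matrix L := (1 + Q*G)⁻¹ * Q lies in Sparse(S). -/
/-- A matrix `Q` lies in the sparsity subspace `Sparse(X)` if `Q i j = 0` whenever `¬ X i j`. -/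
def SparseMem {ι κ : Type*} (X : ι → κ → Prop) (Q : Matrix ι κ ℝ) : Prop :=
  ∀ i j, ¬ X i j → Q i j = 0

/-- The product of two sparsity patterns: `(X·X') i l ↔ ∃ k, X i k ∧ X' k l`. -/
def patProd {ι κ μ : Type*} (X : ι → κ → Prop) (X' : κ → μ → Prop) : ι → μ → Prop :=
  fun i l => ∃ k, X i k ∧ X' k l

/-- Comparison of sparsity patterns: `X ≤ X'` iff `X i j → X' i j` for all `i, j`. -/
def patLe {ι κ : Type*} (X X' : ι → κ → Prop) : Prop :=
  ∀ i j, X i j → X' i j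

lemma sparse_mul {ι κ μ : Type*} [Fintype κ] (X : ι → κ → Prop) (X' : κ → μ → Prop)
    (A : Matrix ι κ ℝ) (B : Matrix κ μ ℝ) (hA : SparseMem X A) (hB : SparseMem X' B) :
    SparseMem (patProd X X') (A * B) := by
  intro i j h
  rw [Matrix.mul_apply]
  apply Finset.sum_eq_zero
  intro k _
  by_cases hk : X i k
  · rw [hB k j (fun h' => h ⟨k, hk, h'⟩), mul_zero]
  · rw [hA i k hk, zero_mul]

theorem gss_sparsity_preserving {ι κ : Type*} [Fintype ι] [Fintype κ]
    [DecidableEq ι] [DecidableEq κ]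
    (G : Matrix κ ι ℝ) (S T : ι → κ → Prop) (Y : ι → ι → Prop)
    (hTS : patLe T S) (hYT : patLe (patProd Y T) T)
    (Q : Matrix ι κ ℝ) (hQ : SparseMem T Q) (hQG : SparseMem Y (Q * G))
    (N : ℕ) (hN : (Q * G) ^ N = 0) :
    IsUnit (1 + Q * G) ∧ SparseMem S ((1 + Q * G)⁻¹ * Q) := by
  set A := Q * G with hA
  have hnil : IsNilpotent (-A) := ⟨N, by rw [neg_pow, hN, mul_zero]⟩
  have hunit : IsUnit (1 + A) := by
    have := hnil.isUnit_one_sub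
    rwa [sub_neg_eq_add] at this
  have hAneg : SparseMem Y (-A) := fun i j h => by
    simp [hQG i j h]
  -- inverse via geometric series
  have hinv : (1 + A)⁻¹ = ∑ k ∈ Finset.range N, (-A) ^ k := by
    apply Matrix.inv_eq_right_inv
    have h1 : (1 - (-A)) * ∑ k ∈ Finset.range N, (-A) ^ k = 1 - (-A) ^ N :=
      mul_neg_geom_sum (-A) N
    rw [sub_neg_eq_add] at h1
    rw [h1, neg_pow, hN, mul_zero, sub_zero]
  refine ⟨hunit, ?_⟩
  have key : ∀ k, SparseMem T ((-A) ^ k * Q) := by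
    intro k
    induction k with
    | zero => simpa using hQ
    | succ n ih =>
        have : (-A) ^ (n + 1) * Q = (-A) * ((-A) ^ n * Q) := by
          rw [pow_succ', Matrix.mul_assoc]
        rw [this]
        intro i j h
        exact sparse_mul Y T (-A) _ hAneg ih i j (fun h' => h (hYT i j h'))
  intro i j h
  rw [hinv, Matrix.sum_mul, Matrix.sum_apply]
  exact Finset.sum_eq_zero fun k _ => key k i j (fun h' => h (hTS i j h'))
end

section
/- Let ι, κ be finite index types, G : Matrix κ ι ℝ a real matrix, T : ι → κ → Prop a sparsity pattern, and define Y_max^T : ι → ι → Prop by Y_max^T i j ↔ (∀ k, T j k → T i k). If Q₁, Q₂ : Matrix ι κ ℝ satisfy Q₁ ∈ Sparse(T), Q₂ ∈ Sparse(T), Q₁*G ∈ Sparse(Y_max^T) and Q₂*G ∈ Sparse(Y_max^T), then Q₁*G*Q₂ ∈ Sparse(T) and (Q₁*G*Q₂)*G ∈ Sparse(Y_max^T). In other words, the generalized sparsity subspace R_G(T, Y_max^T) is quadratically invariant with respect to G. -/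
/-- The maximal pattern `Y_max^T` associated with a sparsity pattern `T`. -/
def Ymax {ι κ : Type*} (T : ι → κ → Prop) : ι → ι → Prop :=
  fun i j => ∀ k, T j k → T i k

theorem maximal_gss_QI {ι κ : Type*} [Fintype ι] [Fintype κ]
    (G : Matrix κ ι ℝ) (T : ι → κ → Prop)
    (Q₁ Q₂ : Matrix ι κ ℝ)
    (hQ₁ : SparseMem T Q₁) (hQ₂ : SparseMem T Q₂)
    (hQ₁G : SparseMem (Ymax T) (Q₁ * G)) (hQ₂G : SparseMem (Ymax T) (Q₂ * G)) :
    SparseMem T (Q₁ * G * Q₂) ∧ SparseMem (Ymax T) (Q₁ * G * Q₂ * G) := by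
  constructor
  · intro i j hij
    rw [Matrix.mul_apply]
    apply Finset.sum_eq_zero
    intro l _
    by_cases hl : T l j
    · have : ¬ Ymax T i l := fun h => hij (h j hl)
      rw [hQ₁G i l this, zero_mul]
    · rw [hQ₂ l j hl, mul_zero]
  · intro i j hij
    have : (Q₁ * G * Q₂ * G) = (Q₁ * G) * (Q₂ * G) := Matrix.mul_assoc _ _ _
    rw [this, Matrix.mul_apply]
    apply Finset.sum_eq_zero
    intro l _
    unfold Ymax at hij; push_neg at hij
    obtain ⟨k, hTjk, hTik⟩ := hij
    by_cases hl : Ymax T l j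
    · have : ¬ Ymax T i l := fun h => hTik (h k (hl k hTjk))
      rw [hQ₁G i l this, zero_mul]
    · rw [hQ₂G l j hl, mul_zero]
end

section
/- Let ι, κ be finite index types with decidable equality, G : Matrix κ ι ℝ, T : ι → κ → Prop a sparsity pattern, and define Y_max^T : ι → ι → Prop by Y_max^T i j ↔ (∀ k, T j k → T i k). Suppose Q : Matrix ι κ ℝ satisfies Q ∈ Sparse(T), Q*G ∈ Sparse(Y_max^T), and (Q*G)^N = 0 for some natural number N. Then the matrix L := (1 + Q*G)⁻¹ * Q satisfies L ∈ Sparse(T) and L*G ∈ Sparse(Y_max^T); that is, the maximal GSS R_G(T, Y_max^T) is closed under the closed-loop map Q ↦ (1 + Q*G)⁻¹ * Q. -/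
lemma sparse_one {ι κ : Type*} [Fintype ι] [DecidableEq ι] (T : ι → κ → Prop) :
    SparseMem (Ymax T) (1 : Matrix ι ι ℝ) := by
  intro i j h
  have : i ≠ j := by rintro rfl; exact h fun k hk => hk
  simp [Matrix.one_apply_ne this]

lemma sparse_mul_YY {ι κ : Type*} [Fintype ι] (T : ι → κ → Prop)
    (A B : Matrix ι ι ℝ) (hA : SparseMem (Ymax T) A) (hB : SparseMem (Ymax T) B) :
    SparseMem (Ymax T) (A * B) := by
  intro i j h
  rw [Matrix.mul_apply]
  apply Finset.sum_eq_zero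
  intro l _
  by_cases hil : Ymax T i l
  · have : ¬ Ymax T l j := fun hlj => h fun k hk => hil k (hlj k hk)
    rw [hB l j this, mul_zero]
  · rw [hA i l hil, zero_mul]

lemma sparse_mul_YT {ι κ : Type*} [Fintype ι] (T : ι → κ → Prop)
    (A : Matrix ι ι ℝ) (B : Matrix ι κ ℝ)
    (hA : SparseMem (Ymax T) A) (hB : SparseMem T B) :
    SparseMem T (A * B) := by
  intro i j h
  rw [Matrix.mul_apply]
  apply Finset.sum_eq_zero
  intro l _
  by_cases hil : Ymax T i l
  · have : ¬ T l j := fun hlj => h (hil j hlj)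
    rw [hB l j this, mul_zero]
  · rw [hA i l hil, zero_mul]

lemma sparse_pow {ι κ : Type*} [Fintype ι] [DecidableEq ι] (T : ι → κ → Prop)
    (A : Matrix ι ι ℝ) (hA : SparseMem (Ymax T) A) (n : ℕ) :
    SparseMem (Ymax T) (A ^ n) := by
  induction n with
  | zero => simpa using sparse_one T
  | succ n ih => rw [pow_succ]; exact sparse_mul_YY T _ _ ih hA

theorem maximal_gss_closed_loop {ι κ : Type*} [Fintype ι] [Fintype κ]
    [DecidableEq ι] [DecidableEq κ]
    (G : Matrix κ ι ℝ) (T : ι → κ → Prop)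
    (Q : Matrix ι κ ℝ)
    (hQ : SparseMem T Q) (hQG : SparseMem (Ymax T) (Q * G))
    (N : ℕ) (hN : (Q * G) ^ N = 0) :
    SparseMem T ((1 + Q * G)⁻¹ * Q) ∧
      SparseMem (Ymax T) (((1 + Q * G)⁻¹ * Q) * G) := by
  set A := Q * G with hA
  set B : Matrix ι ι ℝ := ∑ i ∈ Finset.range N, (-A) ^ i with hB
  have hnegN : (-A) ^ N = 0 := by
    rw [neg_pow, hN, mul_zero]
  have hleft : B * (1 + A) = 1 := by
    have := geom_sum_mul (-A) N
    rw [hnegN] at this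
    have h2 : B * (-A - 1) = -1 := by simpa using this
    calc B * (1 + A) = -(B * (-A - 1)) := by noncomm_ring
    _ = 1 := by rw [h2, neg_neg]
  have hinv : (1 + A)⁻¹ = B := Matrix.inv_eq_left_inv hleft
  have hBs : SparseMem (Ymax T) B := by
    intro i j h
    rw [hB, Matrix.sum_apply]
    apply Finset.sum_eq_zero
    intro n _
    have : SparseMem (Ymax T) ((-A) ^ n) := by
      apply sparse_pow
      intro i j h
      simp [hQG i j h, ← hA]
    exact this i j h
  rw [hinv]
  constructor
  · exact sparse_mul_YT T B Q hBs hQ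
  · rw [Matrix.mul_assoc]
    exact sparse_mul_YY T B A hBs hQG
end

section
/- Let ι, κ be finite index types with decidable equality, M : Matrix κ ι ℝ, and Q : Matrix ι κ ℝ such that M*Q + 1 is invertible. Define L := Q * (M*Q + 1)⁻¹. Then 1 − M*L is invertible and L * (1 − M*L)⁻¹ = Q. -/
theorem Q_to_L_to_Q {ι κ : Type*} [Fintype ι] [Fintype κ]
    [DecidableEq ι] [DecidableEq κ]
    (M : Matrix κ ι ℝ) (Q : Matrix ι κ ℝ) (h : IsUnit (M * Q + 1)) :
    IsUnit (1 - M * (Q * (M * Q + 1)⁻¹)) ∧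
      (Q * (M * Q + 1)⁻¹) * (1 - M * (Q * (M * Q + 1)⁻¹))⁻¹ = Q := by
  have hdet : IsUnit (M * Q + 1).det := (Matrix.isUnit_iff_isUnit_det _).mp h
  have key : 1 - M * (Q * (M * Q + 1)⁻¹) = (M * Q + 1)⁻¹ := by
    rw [← Matrix.mul_assoc]
    calc 1 - M * Q * (M * Q + 1)⁻¹
        = ((M * Q + 1) - M * Q) * (M * Q + 1)⁻¹ := by
          rw [Matrix.sub_mul, Matrix.mul_nonsing_inv _ hdet]
      _ = (M * Q + 1)⁻¹ := by rw [add_sub_cancel_left, Matrix.one_mul]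
  rw [key]
  refine ⟨(Matrix.isUnit_iff_isUnit_det _).mpr (Matrix.isUnit_nonsing_inv_det _ hdet), ?_⟩
  rw [Matrix.nonsing_inv_nonsing_inv _ hdet, Matrix.mul_assoc,
    Matrix.nonsing_inv_mul _ hdet, Matrix.mul_one]
end

section
/- Let ι, κ be finite index types with decidable equality, M : Matrix κ ι ℝ, and L : Matrix ι κ ℝ such that 1 − M*L is invertible. Define Q := L * (1 − M*L)⁻¹. Then M*Q + 1 is invertible and Q * (M*Q + 1)⁻¹ = L. -/
theorem L_to_Q_to_L {ι κ : Type*} [Fintype ι] [Fintype κ]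
    [DecidableEq ι] [DecidableEq κ]
    (M : Matrix κ ι ℝ) (L : Matrix ι κ ℝ) (h : IsUnit (1 - M * L)) :
    IsUnit (M * (L * (1 - M * L)⁻¹) + 1) ∧
      (L * (1 - M * L)⁻¹) * (M * (L * (1 - M * L)⁻¹) + 1)⁻¹ = L := by
  have hd : IsUnit (1 - M * L).det := (Matrix.isUnit_iff_isUnit_det _).mp h
  have key : M * (L * (1 - M * L)⁻¹) + 1 = (1 - M * L)⁻¹ := by
    have h1 : (1 - M * L) * (1 - M * L)⁻¹ = 1 := Matrix.mul_nonsing_inv _ hd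
    calc M * (L * (1 - M * L)⁻¹) + 1
        = M * L * (1 - M * L)⁻¹ + (1 - M * L) * (1 - M * L)⁻¹ := by
          rw [h1, Matrix.mul_assoc]
      _ = (1 - M * L)⁻¹ := by rw [← Matrix.add_mul, add_sub_cancel, Matrix.one_mul]
  have hinv : IsUnit (1 - M * L)⁻¹ := by
    exact Matrix.isUnit_nonsing_inv_iff.mpr h
  refine ⟨by rw [key]; exact hinv, ?_⟩
  rw [key, Matrix.nonsing_inv_nonsing_inv _ hd, Matrix.mul_assoc,
    Matrix.nonsing_inv_mul _ hd, Matrix.mul_one]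
end

section
/- Let ι, κ be finite index types with decidable equality, M : Matrix κ ι ℝ, Q : Matrix ι κ ℝ with M*Q + 1 invertible, and let v : ι → ℝ and a : κ → ℝ be vectors. Define L := Q * (M*Q + 1)⁻¹ and g := v − L.mulVec (M.mulVec v + a). Then L * (1 − M*L)⁻¹ = Q and Q.mulVec (M.mulVec g + a) + g = v; that is, the affine parts of the two controller parametrizations are mutually inverse. -/
theorem affine_parts_inverse {ι κ : Type*} [Fintype ι] [Fintype κ]
    [DecidableEq ι] [DecidableEq κ]
    (M : Matrix κ ι ℝ) (Q : Matrix ι κ ℝ) (h : IsUnit (M * Q + 1))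
    (v : ι → ℝ) (a : κ → ℝ)
    (L : Matrix ι κ ℝ) (hL : L = Q * (M * Q + 1)⁻¹)
    (g : ι → ℝ) (hg : g = v - L.mulVec (M.mulVec v + a)) :
    L * (1 - M * L)⁻¹ = Q ∧ Q.mulVec (M.mulVec g + a) + g = v := by
  set S := M * Q + 1 with hS
  have hdet : IsUnit S.det := (Matrix.isUnit_iff_isUnit_det S).mp h
  have hSmul : S * S⁻¹ = 1 := Matrix.mul_nonsing_inv S hdet
  have hinvS : S⁻¹ * S = 1 := Matrix.nonsing_inv_mul S hdet
  have h1 : 1 - M * L = S⁻¹ := by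
    rw [hL, ← Matrix.mul_assoc, sub_eq_iff_eq_add, ← hSmul, hS,
      Matrix.add_mul, Matrix.one_mul, add_comm]
  have hfirst : L * (1 - M * L)⁻¹ = Q := by
    rw [h1, Matrix.nonsing_inv_nonsing_inv S hdet, hL, Matrix.mul_assoc,
      hinvS, Matrix.mul_one]
  refine ⟨hfirst, ?_⟩
  have hQL : (Q * M + 1) * L = Q := by
    rw [hL]
    simp only [Matrix.add_mul, Matrix.one_mul, ← Matrix.mul_assoc]
    rw [← Matrix.add_mul]
    have hq : Q * M * Q + Q = Q * S := by
      rw [hS, Matrix.mul_add, Matrix.mul_one, Matrix.mul_assoc]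
    rw [hq, Matrix.mul_assoc, hSmul, Matrix.mul_one]
  have hg2 : (Q * M + 1).mulVec g
      = (Q * M + 1).mulVec v - Q.mulVec (M.mulVec v + a) := by
    rw [hg, Matrix.mulVec_sub, Matrix.mulVec_mulVec, hQL]
  have expand : Q.mulVec (M.mulVec g + a) + g
      = (Q * M + 1).mulVec g + Q.mulVec a := by
    simp [Matrix.mulVec_add, Matrix.add_mulVec, Matrix.mulVec_mulVec,
      Matrix.one_mulVec]
    abel
  rw [expand, hg2]
  simp [Matrix.mulVec_add, Matrix.add_mulVec, Matrix.mulVec_mulVec,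
    Matrix.one_mulVec]
end

section
/- Let ι, κ be finite index types with decidable equality, M : Matrix κ ι ℝ, Q : Matrix ι κ ℝ with 1 + Q*M invertible, and let y : κ → ℝ and g : ι → ℝ be vectors. Define L := (1 + Q*M)⁻¹ * Q and u := L.mulVec y + g. Then u = Q.mulVec y − (Q*M).mulVec u + (1 + Q*M).mulVec g. -/
theorem input_sharing_implicit {ι κ : Type*} [Fintype ι] [Fintype κ]
    [DecidableEq ι] [DecidableEq κ]
    (M : Matrix κ ι ℝ) (Q : Matrix ι κ ℝ) (h : IsUnit (1 + Q * M))
    (y : κ → ℝ) (g : ι → ℝ) :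
    let L := (1 + Q * M)⁻¹ * Q
    let u := L.mulVec y + g
    u = Q.mulVec y - (Q * M).mulVec u + (1 + Q * M).mulVec g := by
  intro L u
  have hd : IsUnit (1 + Q * M).det := (Matrix.isUnit_iff_isUnit_det _).mp h
  have key : (1 + Q * M) * L = Q := Matrix.mul_nonsing_inv_cancel_left _ _ hd
  have hL : L.mulVec y = Q.mulVec y - (Q * M).mulVec (L.mulVec y) := by
    have := congrArg (fun A => Matrix.mulVec A y) key
    simp only [Matrix.add_mulVec, Matrix.one_mulVec, ← Matrix.mulVec_mulVec] at this ⊢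
    rw [← this]; abel
  show L.mulVec y + g = _
  rw [Matrix.mulVec_add, Matrix.add_mulVec, Matrix.one_mulVec]
  conv_lhs => rw [hL]
  abel
end

section
/- Let ι, κ be finite index types with decidable equality, G : Matrix κ ι ℝ, and let K be a submodule of Matrix ι κ ℝ that is quadratically invariant with respect to G (i.e., K₁*G*K₂ ∈ K for all K₁, K₂ ∈ K). Suppose that for every K ∈ K the matrix G*K is nilpotent. Then for every K ∈ K the matrix 1 − G*K is invertible and K * (1 − G*K)⁻¹ ∈ K. -/
theorem QI_closed_loop_mem {ι κ : Type*} [Fintype ι] [Fintype κ]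
    [DecidableEq ι] [DecidableEq κ]
    (G : Matrix κ ι ℝ) (K : Submodule ℝ (Matrix ι κ ℝ))
    (hQI : ∀ K₁ ∈ K, ∀ K₂ ∈ K, K₁ * G * K₂ ∈ K)
    (hnil : ∀ Q ∈ K, IsNilpotent (G * Q)) :
    ∀ Q ∈ K, IsUnit (1 - G * Q) ∧ Q * (1 - G * Q)⁻¹ ∈ K := by
  intro Q hQ
  obtain ⟨n, hn⟩ := hnil Q hQ
  have hpow : ∀ i, Q * (G * Q) ^ i ∈ K := by
    intro i
    induction i with
    | zero => simpa using hQ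
    | succ i ih =>
      have : Q * (G * Q) ^ (i + 1) = (Q * (G * Q) ^ i) * G * Q := by
        rw [pow_succ, ← Matrix.mul_assoc, ← Matrix.mul_assoc]
      rw [this]
      exact hQI _ ih _ hQ
  have hunit : IsUnit (1 - G * Q) := (hnil Q hQ).isUnit_one_sub
  refine ⟨hunit, ?_⟩
  have hinv : (1 - G * Q)⁻¹ = ∑ i ∈ Finset.range n, (G * Q) ^ i := by
    apply Matrix.inv_eq_right_inv
    rw [mul_neg_geom_sum, hn, sub_zero]
  rw [hinv, Matrix.mul_sum]
  exact Submodule.sum_mem K fun i _ => hpow i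
end
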